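/- Let m > 0. For every η ∈ ℝ³ → ℂ with ∫_{|p| ≥ ε} |p|^{−1} |η̂(p)|² dp < ∞, define (Ĝη)(k₁,k₂) = (η̂(k₁) − η̂(k₂))/(k₁² + k₂² + (2/(m+1)) k₁·k₂). Then ∫∫_{|k₁| ≥ ε, |k₂| ≥ ε} |(Ĝη)(k₁,k₂)|² dk₁ dk₂ ≤ c₂ ∫_{|p| ≥ ε} |p|^{−1} |η̂(p)|² dp, with c₂ = 8 ∫_{ℝ³} (1 + q² − (2/(m+1))q)^{−2} dq. -/

import Mathlib

/-!
For `0 ≤ b < 2`, Cauchy–Schwarz bounds the denominator `|k₁|² + |k₂|² + b k₁·k₂` from below by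
`|k₁|² + |k₂|² - b |k₁| |k₂| > 0`, and `|u - v|² ≤ 2|u|² + 2|v|²`, so the integrand is at most
`(2|η(k₁)|² + 2|η(k₂)|²) K(k₁, k₂)` with the symmetric kernel
`K(k₁, k₂) = (|k₁|² + |k₂|² - b |k₁| |k₂|)⁻²`. By symmetry the two terms contribute equally, and
the substitution `k₂ = |k₁| q` gives `∫ K(k₁, ·) = |k₁|^(d - 4) C`, where
`C = ∫ (1 + |q|² - b |q|)⁻²` is finite in dimension `d < 4` because its integrand decays like `|q|⁻⁴`.
This gives the bound with the constant `4 C` in place of `8 C`.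
-/

open MeasureTheory Real
open scoped RealInnerProductSpace ENNReal

section Schur

variable {α : Type*} [MeasurableSpace α] {μ : Measure α}

lemma enorm_integral_integral_le {β G : Type*} [MeasurableSpace β] {ν : Measure β}
    [NormedAddCommGroup G] [NormedSpace ℝ G] (F : α → β → G) :
    ‖∫ x, ∫ y, F x y ∂ν ∂μ‖ₑ ≤ ∫⁻ x, ∫⁻ y, ‖F x y‖ₑ ∂ν ∂μ :=
  (enorm_integral_le_lintegral_enorm _).trans
    (lintegral_mono fun _ => enorm_integral_le_lintegral_enorm _)

lemma lintegral_lintegral_add_mul_le_of_symm [SFinite μ] {f g : α → ℝ≥0∞}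
    {w : α → α → ℝ≥0∞} (hf : Measurable f) (hw : Measurable (Function.uncurry w))
    (hsymm : ∀ x y, w x y = w y x) (hwg : ∀ᵐ x ∂μ, ∫⁻ y, w x y ∂μ ≤ g x) :
    ∫⁻ x, ∫⁻ y, (f x + f y) * w x y ∂μ ∂μ ≤ 2 * ∫⁻ x, f x * g x ∂μ := by
  have hw_right (x : α) : Measurable (w x) := hw.comp (measurable_const.prodMk measurable_id)
  have hfw_left : Measurable fun p : α × α => f p.1 * w p.1 p.2 :=
    (hf.comp measurable_fst).mul hw
  have hswap : ∫⁻ x, ∫⁻ y, f y * w x y ∂μ ∂μ = ∫⁻ x, ∫⁻ y, f x * w x y ∂μ ∂μ := by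
    rw [lintegral_lintegral_swap ((hf.comp measurable_snd).mul hw).aemeasurable]
    simp_rw [hsymm]
  calc ∫⁻ x, ∫⁻ y, (f x + f y) * w x y ∂μ ∂μ
      = ∫⁻ x, (∫⁻ y, f x * w x y ∂μ) + ∫⁻ y, f y * w x y ∂μ ∂μ :=
        lintegral_congr fun x => by
          simp_rw [add_mul]; exact lintegral_add_left ((hw_right x).const_mul _) _
    _ = 2 * ∫⁻ x, f x * ∫⁻ y, w x y ∂μ ∂μ := by
        rw [lintegral_add_left hfw_left.lintegral_prod_right', hswap, ← two_mul]
        simp_rw [lintegral_const_mul _ (hw_right _)]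
    _ ≤ 2 * ∫⁻ x, f x * g x ∂μ := by
        gcongr 2 * ?_
        exact lintegral_mono_ae (hwg.mono fun x hx => by gcongr)

end Schur

lemma mul_one_add_sq_le_one_add_sq_sub_mul {b : ℝ} (hb : -2 ≤ b) (t : ℝ) :
    (2 - b) / 4 * (1 + t) ^ 2 ≤ 1 + t ^ 2 - b * t := by
  -- the difference is `(2 + b) / 4 * (1 - t) ^ 2`
  nlinarith [mul_nonneg (by linarith : (0:ℝ) ≤ 2 + b) (sq_nonneg (1 - t))]

lemma one_add_sq_sub_mul_pos {b : ℝ} (hb0 : 0 ≤ b) (hb2 : b < 2) {t : ℝ} (ht : 0 ≤ t) :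
    0 < 1 + t ^ 2 - b * t :=
  (by positivity : 0 < (2 - b) / 4 * (1 + t) ^ 2).trans_le
    (mul_one_add_sq_le_one_add_sq_sub_mul (by linarith) t)

section Kernel

variable {E : Type*} [NormedAddCommGroup E]

noncomputable def radialKernel (b : ℝ) (x y : E) : ℝ :=
  1 / (‖x‖ ^ 2 + ‖y‖ ^ 2 - b * (‖x‖ * ‖y‖)) ^ 2

lemma radialKernel_comm (b : ℝ) (x y : E) : radialKernel b x y = radialKernel b y x := by
  unfold radialKernel; ring

lemma radialKernel_nonneg (b : ℝ) (x y : E) : 0 ≤ radialKernel b x y := by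
  unfold radialKernel; positivity

section Scaling

variable [NormedSpace ℝ E]

lemma radialKernel_eq_smul {b : ℝ} (hb0 : 0 ≤ b) (hb2 : b < 2) {x : E} (hx : x ≠ 0) (y : E) :
    radialKernel b x y
      = (‖x‖ ^ 4)⁻¹ * (1 / (1 + ‖‖x‖⁻¹ • y‖ ^ 2 - b * ‖‖x‖⁻¹ • y‖) ^ 2) := by
  have hr : 0 < ‖x‖ := norm_pos_iff.2 hx
  rw [norm_smul, norm_inv, norm_norm]
  have := one_add_sq_sub_mul_pos hb0 hb2 (by positivity : 0 ≤ ‖x‖⁻¹ * ‖y‖)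
  unfold radialKernel
  field_simp

variable [FiniteDimensional ℝ E] [MeasurableSpace E] [BorelSpace E] (μ : Measure E)
  [μ.IsAddHaarMeasure]

lemma integrable_inv_one_add_sq_sub_mul_sq {b : ℝ} (hb0 : 0 ≤ b) (hb2 : b < 2)
    (hd : Module.finrank ℝ E < 4) :
    Integrable (fun q : E => 1 / (1 + ‖q‖ ^ 2 - b * ‖q‖) ^ 2) μ := by
  have hdom : Integrable (fun q : E => (4 / (2 - b)) ^ 2 * (1 + ‖q‖) ^ (-(4 : ℝ))) μ :=
    (integrable_one_add_norm (by exact_mod_cast hd)).const_mul _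
  refine hdom.mono' (Measurable.aestronglyMeasurable (by fun_prop)) (.of_forall fun q => ?_)
  have hlow := mul_one_add_sq_le_one_add_sq_sub_mul (by linarith : -2 ≤ b) ‖q‖
  have h2b : 0 < 2 - b := by linarith
  have hpow : (1 + ‖q‖) ^ (-(4 : ℝ)) = 1 / ((1 + ‖q‖) ^ 2) ^ 2 := by
    rw [rpow_neg (by positivity), one_div]; norm_cast; ring
  rw [norm_of_nonneg (by positivity), hpow]
  calc 1 / (1 + ‖q‖ ^ 2 - b * ‖q‖) ^ 2 ≤ 1 / ((2 - b) / 4 * (1 + ‖q‖) ^ 2) ^ 2 := by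
        gcongr
    _ = _ := by field_simp

lemma integrable_radialKernel {b : ℝ} (hb0 : 0 ≤ b) (hb2 : b < 2)
    (hd : Module.finrank ℝ E < 4) {x : E} (hx : x ≠ 0) :
    Integrable (radialKernel b x) μ := by
  have hscaled := ((integrable_comp_smul_iff μ _ (inv_ne_zero (norm_ne_zero_iff.2 hx))).2
    (integrable_inv_one_add_sq_sub_mul_sq μ hb0 hb2 hd)).const_mul (‖x‖ ^ 4)⁻¹
  exact hscaled.congr (.of_forall fun y => (radialKernel_eq_smul hb0 hb2 hx y).symm)

lemma integral_radialKernel {b : ℝ} (hb0 : 0 ≤ b) (hb2 : b < 2) {x : E} (hx : x ≠ 0) :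
    ∫ y, radialKernel b x y ∂μ
      = ‖x‖ ^ ((Module.finrank ℝ E : ℤ) - 4) * ∫ q, 1 / (1 + ‖q‖ ^ 2 - b * ‖q‖) ^ 2 ∂μ := by
  rw [funext (radialKernel_eq_smul hb0 hb2 hx), integral_const_mul,
    Measure.integral_comp_inv_smul_of_nonneg μ (fun q : E => 1 / (1 + ‖q‖ ^ 2 - b * ‖q‖) ^ 2)
      (norm_nonneg x), smul_eq_mul, zpow_sub₀ (norm_ne_zero_iff.2 hx), zpow_natCast, zpow_ofNat]
  ring

lemma lintegral_radialKernel_le {b : ℝ} (hb0 : 0 ≤ b) (hb2 : b < 2)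
    (hd : Module.finrank ℝ E < 4) {x : E} (hx : x ≠ 0) (s : Set E) :
    ∫⁻ y in s, ENNReal.ofReal (radialKernel b x y) ∂μ
      ≤ ENNReal.ofReal (‖x‖ ^ ((Module.finrank ℝ E : ℤ) - 4)
          * ∫ q, 1 / (1 + ‖q‖ ^ 2 - b * ‖q‖) ^ 2 ∂μ) := by
  rw [← integral_radialKernel μ hb0 hb2 hx, ofReal_integral_eq_lintegral_ofReal
      (integrable_radialKernel μ hb0 hb2 hd hx) (.of_forall (radialKernel_nonneg b x))]
  exact setLIntegral_le_lintegral s _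

end Scaling

lemma measurable_radialKernel [MeasurableSpace E] [OpensMeasurableSpace E] (b : ℝ) :
    Measurable (Function.uncurry (radialKernel (E := E) b)) := by
  unfold Function.uncurry radialKernel
  fun_prop

lemma norm_div_sq_le_radialKernel [InnerProductSpace ℝ E] {b : ℝ} (hb0 : 0 ≤ b) (hb2 : b < 2)
    {x : E} (hx : x ≠ 0) (y : E) (u v : ℂ) :
    ‖(u - v) / ((‖x‖ ^ 2 + ‖y‖ ^ 2 + b * ⟪x, y⟫ : ℝ) : ℂ)‖ ^ 2
      ≤ (2 * ‖u‖ ^ 2 + 2 * ‖v‖ ^ 2) * radialKernel b x y := by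
  have hlow : 0 < ‖x‖ ^ 2 + ‖y‖ ^ 2 - b * (‖x‖ * ‖y‖) := by
    have := one_add_sq_sub_mul_pos hb0 hb2 (by positivity : 0 ≤ ‖y‖ / ‖x‖)
    have hr : 0 < ‖x‖ := norm_pos_iff.2 hx
    calc (0 : ℝ) < ‖x‖ ^ 2 * (1 + (‖y‖ / ‖x‖) ^ 2 - b * (‖y‖ / ‖x‖)) := by positivity
      _ = _ := by field_simp
  have hden : ‖x‖ ^ 2 + ‖y‖ ^ 2 - b * (‖x‖ * ‖y‖) ≤ ‖x‖ ^ 2 + ‖y‖ ^ 2 + b * ⟪x, y⟫ := by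
    have := mul_le_mul_of_nonneg_left (neg_le_of_abs_le (abs_real_inner_le_norm x y)) hb0
    linarith
  have hnum : ‖u - v‖ ^ 2 ≤ 2 * ‖u‖ ^ 2 + 2 * ‖v‖ ^ 2 := by
    nlinarith [norm_sub_le u v, norm_nonneg (u - v), sq_nonneg (‖u‖ - ‖v‖)]
  rw [norm_div, Complex.norm_real, norm_of_nonneg (hlow.trans_le hden).le, div_pow, radialKernel,
    ← div_eq_mul_one_div]
  gcongr

theorem integral_integral_norm_div_sq_le [InnerProductSpace ℝ E] [FiniteDimensional ℝ E]
    [MeasurableSpace E] [BorelSpace E] (μ : Measure E) [μ.IsAddHaarMeasure]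
    (hd : Module.finrank ℝ E < 4) {b : ℝ} (hb0 : 0 ≤ b) (hb2 : b < 2) {S : Set E}
    (hS : MeasurableSet S) (hS0 : (0 : E) ∉ S) {η : E → ℂ} (hη : Measurable η)
    (hfin : IntegrableOn (fun p => ‖p‖ ^ ((Module.finrank ℝ E : ℤ) - 4) * ‖η p‖ ^ 2) S μ) :
    ∫ k₁ in S, ∫ k₂ in S, ‖(η k₁ - η k₂) / ((‖k₁‖ ^ 2 + ‖k₂‖ ^ 2 + b * ⟪k₁, k₂⟫ : ℝ) : ℂ)‖ ^ 2 ∂μ ∂μ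
      ≤ 4 * (∫ q, 1 / (1 + ‖q‖ ^ 2 - b * ‖q‖) ^ 2 ∂μ)
          * ∫ p in S, ‖p‖ ^ ((Module.finrank ℝ E : ℤ) - 4) * ‖η p‖ ^ 2 ∂μ := by
  have hS_ne (k) (hk : k ∈ S) : k ≠ 0 := ne_of_mem_of_not_mem hk hS0
  set C := ∫ q, 1 / (1 + ‖q‖ ^ 2 - b * ‖q‖) ^ 2 ∂μ
  set w : E → ℝ := fun p => ‖p‖ ^ ((Module.finrank ℝ E : ℤ) - 4)
  have hkernel : ∀ᵐ k ∂μ.restrict S,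
      ∫⁻ k', ENNReal.ofReal (radialKernel b k k') ∂μ.restrict S ≤ ENNReal.ofReal (w k * C) := by
    filter_upwards [ae_restrict_mem hS] with k hk
    exact lintegral_radialKernel_le μ hb0 hb2 hd (hS_ne k hk) S
  have hpoint (k₁) (hk₁ : k₁ ∈ S) (k₂) :
      ‖‖(η k₁ - η k₂) / ((‖k₁‖ ^ 2 + ‖k₂‖ ^ 2 + b * ⟪k₁, k₂⟫ : ℝ) : ℂ)‖ ^ 2‖ₑ
        ≤ (ENNReal.ofReal (2 * ‖η k₁‖ ^ 2) + ENNReal.ofReal (2 * ‖η k₂‖ ^ 2))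
          * ENNReal.ofReal (radialKernel b k₁ k₂) := by
    rw [Real.enorm_of_nonneg (by positivity), ← ENNReal.ofReal_add (by positivity) (by positivity),
      ← ENNReal.ofReal_mul (by positivity)]
    exact ENNReal.ofReal_le_ofReal (norm_div_sq_le_radialKernel hb0 hb2 (hS_ne k₁ hk₁) k₂ _ _)
  refine (le_abs_self _).trans ((ENNReal.ofReal_le_ofReal_iff (by positivity)).1 ?_)
  rw [← Real.enorm_eq_ofReal_abs]
  calc _ ≤ _ := enorm_integral_integral_le _
    _ ≤ ∫⁻ k₁ in S, ∫⁻ k₂ in S, (ENNReal.ofReal (2 * ‖η k₁‖ ^ 2)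
          + ENNReal.ofReal (2 * ‖η k₂‖ ^ 2)) * ENNReal.ofReal (radialKernel b k₁ k₂) ∂μ ∂μ :=
        lintegral_mono_ae ((ae_restrict_mem hS).mono fun k₁ hk₁ =>
          lintegral_mono fun k₂ => hpoint k₁ hk₁ k₂)
    _ ≤ 2 * ∫⁻ k in S, ENNReal.ofReal (2 * ‖η k‖ ^ 2) * ENNReal.ofReal (w k * C) ∂μ :=
        lintegral_lintegral_add_mul_le_of_symm (by fun_prop)
          (ENNReal.measurable_ofReal.comp (measurable_radialKernel b))
          (fun x y => by rw [radialKernel_comm]) hkernel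
    _ = 2 * ∫⁻ k in S, ENNReal.ofReal (2 * C) * ENNReal.ofReal (w k * ‖η k‖ ^ 2) ∂μ := by
        congr 1
        refine lintegral_congr fun k => ?_
        rw [← ENNReal.ofReal_mul (by positivity), ← ENNReal.ofReal_mul (by positivity)]
        congr 1
        ring
    _ = ENNReal.ofReal (4 * C * ∫ p in S, w p * ‖η p‖ ^ 2 ∂μ) := by
        rw [lintegral_const_mul' _ _ ENNReal.ofReal_ne_top, ← ofReal_integral_eq_lintegral_ofReal
          hfin (.of_forall fun p => by positivity), ← ENNReal.ofReal_mul (by positivity),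
          ← ENNReal.ofReal_ofNat 2, ← ENNReal.ofReal_mul zero_le_two]
        congr 1
        ring

end Kernel

theorem stmt15 (m ε : ℝ) (hm : 0 < m) (hε : 0 < ε)
    (η : EuclideanSpace ℝ (Fin 3) → ℂ) (hηmeas : Measurable η)
    (hfin :
      IntegrableOn (fun p : EuclideanSpace ℝ (Fin 3) => ‖p‖⁻¹ * ‖η p‖ ^ 2)
        {p : EuclideanSpace ℝ (Fin 3) | ε ≤ ‖p‖}) :
    (∫ k₁ in {k : EuclideanSpace ℝ (Fin 3) | ε ≤ ‖k‖},
        ∫ k₂ in {k : EuclideanSpace ℝ (Fin 3) | ε ≤ ‖k‖},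
          ‖(η k₁ - η k₂) /
              ((‖k₁‖ ^ 2 + ‖k₂‖ ^ 2 + (2 / (m + 1)) * ⟪k₁, k₂⟫ : ℝ) : ℂ)‖ ^ 2) ≤
      (8 * ∫ q : EuclideanSpace ℝ (Fin 3),
          (1 / (1 + ‖q‖ ^ 2 - (2 / (m + 1)) * ‖q‖) ^ 2)) *
        ∫ p in {p : EuclideanSpace ℝ (Fin 3) | ε ≤ ‖p‖}, ‖p‖⁻¹ * ‖η p‖ ^ 2 := by
  have hb0 : 0 ≤ 2 / (m + 1) := div_nonneg zero_le_two (by linarith)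
  have hb2 : 2 / (m + 1) < 2 := by rw [div_lt_iff₀ (by linarith)]; linarith
  have hweight (p : EuclideanSpace ℝ (Fin 3)) :
      ‖p‖ ^ ((Module.finrank ℝ (EuclideanSpace ℝ (Fin 3)) : ℤ) - 4) = ‖p‖⁻¹ := by
    simp
  have h := integral_integral_norm_div_sq_le volume (by simp) hb0 hb2
    (measurableSet_le measurable_const measurable_norm) (by simpa using hε) hηmeas
    (by simpa only [hweight] using hfin)
  simp only [hweight] at h
  exact h.trans (by gcongr; norm_num)
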